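/- arXiv:1304.6358 — 8 statements merged into one kernel-verified Lean document; each statement's English description precedes it below -/
import Mathlib

section
/- Let α ≥ 1 be a real number and let c₁, c₂, d₁, d₂ ≥ 0 satisfy d₁ < c₁ ≤ c₂ < d₂ and c₁ + c₂ > d₁ + d₂. Then c₁^(1/α) + c₂^(1/α) > d₁^(1/α) + d₂^(1/α). -/
/-! Raising `d₂` to `c₁ + c₂ - d₁` only increases the right-hand side, since `x ↦ x ^ (1/α)` is
strictly increasing, and makes the two sums equal. The pair `(c₁, c₂)` then lies between the
extremes `d₁ ≤ c₁, c₂ ≤ c₁ + c₂ - d₁` with the same sum, so concavity of `x ↦ x ^ (1/α)` gives the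
inequality between the sums of roots. -/

theorem ConcaveOn.add_le_add_of_add_eq {𝕜 β : Type*} [Field 𝕜] [LinearOrder 𝕜]
    [IsStrictOrderedRing 𝕜] [AddCommGroup β] [PartialOrder β] [IsOrderedAddMonoid β]
    [Module 𝕜 β] [PosSMulMono 𝕜 β] {s : Set 𝕜} {f : 𝕜 → β} (hf : ConcaveOn 𝕜 s f)
    {a b c d : 𝕜} (ha : a ∈ s) (hd : d ∈ s) (hab : a ≤ b) (hac : a ≤ c)
    (hsum : b + c = a + d) : f a + f d ≤ f b + f c := by
  rcases hab.eq_or_lt with rfl | hab'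
  · obtain rfl : c = d := by linarith
    rw [add_comm]
  have had : 0 < d - a := by linarith
  set t := (c - a) / (d - a)
  have ht₀ : 0 ≤ t := div_nonneg (by linarith) had.le
  have ht₁ : 0 ≤ 1 - t := by
    rw [sub_nonneg, div_le_one had]; linarith
  have hc_comb : (1 - t) • a + t • d = c := by
    simp only [smul_eq_mul, t]; field_simp; ring
  have hb_comb : t • a + (1 - t) • d = b := by
    simp only [smul_eq_mul, t]; field_simp; linear_combination (a - d) * hsum
  have h₁ := hf.2 ha hd ht₁ ht₀ (sub_add_cancel 1 t)
  have h₂ := hf.2 ha hd ht₀ ht₁ (add_sub_cancel t 1)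
  rw [hc_comb] at h₁
  rw [hb_comb] at h₂
  calc f a + f d = ((1 - t) • f a + t • f d) + (t • f a + (1 - t) • f d) := by
        rw [add_add_add_comm, ← add_smul, ← add_smul, sub_add_cancel, add_sub_cancel,
          one_smul, one_smul]
    _ ≤ f b + f c := by rw [add_comm (f b)]; exact add_le_add h₁ h₂

theorem root_sum_inequality_general (α c₁ c₂ d₁ d₂ : ℝ) (hα : 1 ≤ α)
    (hd₁ : 0 ≤ d₁)
    (h1 : d₁ < c₁) (h2 : c₁ ≤ c₂) (h3 : c₂ < d₂)
    (hsum : c₁ + c₂ > d₁ + d₂) :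
    c₁ ^ (1/α) + c₂ ^ (1/α) > d₁ ^ (1/α) + d₂ ^ (1/α) := by
  have hp₀ : 0 < 1 / α := by positivity
  have hp₁ : 1 / α ≤ 1 := by rw [div_le_one (by linarith)]; exact hα
  calc d₁ ^ (1/α) + d₂ ^ (1/α) < d₁ ^ (1/α) + (c₁ + c₂ - d₁) ^ (1/α) := by
        gcongr
        · linarith
        · linarith
    _ ≤ c₁ ^ (1/α) + c₂ ^ (1/α) :=
      (Real.concaveOn_rpow hp₀.le hp₁).add_le_add_of_add_eq hd₁
        (show (0:ℝ) ≤ c₁ + c₂ - d₁ by linarith) h1.le (by linarith) (by ring)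

theorem root_sum_inequality (α c₁ c₂ d₁ d₂ : ℝ) (hα : 1 ≤ α)
    (hc₁ : 0 ≤ c₁) (hc₂ : 0 ≤ c₂) (hd₁ : 0 ≤ d₁) (hd₂ : 0 ≤ d₂)
    (h1 : d₁ < c₁) (h2 : c₁ ≤ c₂) (h3 : c₂ < d₂)
    (hsum : c₁ + c₂ > d₁ + d₂) :
    c₁ ^ (1/α) + c₂ ^ (1/α) > d₁ ^ (1/α) + d₂ ^ (1/α) :=
  root_sum_inequality_general α c₁ c₂ d₁ d₂ hα hd₁ h1 h2 h3 hsum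
end

section
/- Let a > 0, t > 0, b ≥ 0 and α > 1. Define g(d) = d + ((b - a·|d|)/t)^(1/α) for d ∈ [-b/a, b/a]. Then g attains its maximum at d* = b/a − (1/α)·(a/(α t))^(1/(α−1)) whenever d* ≥ 0, and the maximum value equals b/a + (1 − 1/α)·(a/(α t))^(1/(α−1)). -/
theorem right_reach_max (a t b α : ℝ) (ha : 0 < a) (ht : 0 < t) (hb : 0 ≤ b) (hα : 1 < α)
    (dstar : ℝ) (hd : dstar = b/a - (1/α) * (a/(α*t)) ^ (1/(α-1)))
    (hd0 : 0 ≤ dstar) :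
    dstar ∈ Set.Icc (-(b/a)) (b/a) ∧
    IsMaxOn (fun d : ℝ => d + ((b - a * |d|)/t) ^ (1/α)) (Set.Icc (-(b/a)) (b/a)) dstar ∧
    dstar + ((b - a * |dstar|)/t) ^ (1/α) = b/a + (1 - 1/α) * (a/(α*t)) ^ (1/(α-1)) := by
  have hα0 : (0:ℝ) < α := lt_trans one_pos hα
  have hα1 : α - 1 ≠ 0 := sub_ne_zero.2 (ne_of_gt hα)
  set c : ℝ := (a/(α*t)) ^ (1/(α-1)) with hc_def
  have hbase : 0 < a/(α*t) := by positivity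
  have hc : 0 < c := Real.rpow_pos_of_pos hbase _
  -- c ^ (α - 1) = a / (α * t)
  have hA : c ^ (α - 1) = a/(α*t) := by
    rw [hc_def, ← Real.rpow_mul hbase.le, one_div_mul_cancel hα1, Real.rpow_one]
  set A : ℝ := c ^ (α - 1) with hA_def
  have hA0 : 0 < A := Real.rpow_pos_of_pos hc _
  -- c ^ α = c * A
  have hcα : c ^ α = c * A := by
    rw [hA_def, show α = 1 + (α - 1) by ring, Real.rpow_add hc, Real.rpow_one]
    norm_num
  have hcα0 : 0 < c ^ α := Real.rpow_pos_of_pos hc _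
  -- a = α * t * A
  have haA : a = α * t * A := by
    rw [hA]; field_simp
  -- tangent line inequality
  have tangent : ∀ x : ℝ, 0 ≤ x → x ^ (1/α) ≤ c * (1 + (1/α) * (x / c ^ α - 1)) := by
    intro x hx
    have hs : -1 ≤ x / c ^ α - 1 := by
      have : 0 ≤ x / c ^ α := div_nonneg hx hcα0.le
      linarith
    have h := rpow_one_add_le_one_add_mul_self hs (p := 1/α) (by positivity)
      (by rw [div_le_one hα0]; linarith)
    have hL : (1 + (x / c ^ α - 1)) ^ (1/α) = x ^ (1/α) / c := by
      rw [show 1 + (x / c ^ α - 1) = x / c ^ α by ring,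
        Real.div_rpow hx hcα0.le, ← Real.rpow_mul hc.le, mul_one_div, div_self (ne_of_gt hα0),
        Real.rpow_one]
    rw [hL] at h
    calc x ^ (1/α) = (x ^ (1/α) / c) * c := by field_simp
      _ ≤ (1 + (1/α) * (x / c ^ α - 1)) * c := by
          exact mul_le_mul_of_nonneg_right h hc.le
      _ = c * (1 + (1/α) * (x / c ^ α - 1)) := by ring
  -- dstar = b/a - c/α
  have hd' : dstar = b/a - c/α := by rw [hd]; ring
  have hdub : dstar ≤ b/a := by
    rw [hd']
    have : 0 < c/α := by positivity
    linarith
  have hmem : dstar ∈ Set.Icc (-(b/a)) (b/a) := by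
    constructor
    · have : 0 ≤ b/a := by positivity
      linarith
    · exact hdub
  -- value at dstar
  have hxstar : (b - a * |dstar|)/t = c ^ α := by
    rw [abs_of_nonneg hd0, hd', hcα, haA]
    field_simp
    ring
  have hval : dstar + ((b - a * |dstar|)/t) ^ (1/α) = b/a + (1 - 1/α) * c := by
    rw [hxstar, ← Real.rpow_mul hc.le, mul_one_div, div_self (ne_of_gt hα0), Real.rpow_one, hd']
    ring
  refine ⟨hmem, ?_, hval⟩
  intro d hdmem
  simp only [Set.mem_setOf_eq]
  have habs : |d| ≤ b/a := abs_le.2 ⟨by linarith [hdmem.1], hdmem.2⟩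
  have hx : 0 ≤ (b - a * |d|)/t := by
    have h3 : |d| * a ≤ b := (le_div_iff₀ ha).1 habs
    have : a * |d| ≤ b := by linarith [mul_comm a (|d|)]
    have : 0 ≤ b - a * |d| := by linarith
    positivity
  have key : d + ((b - a * |d|)/t) ^ (1/α) ≤ b/a + (1 - 1/α) * c := by
    have h1 := tangent _ hx
    have h2 : d ≤ |d| := le_abs_self d
    have heq : |d| + c * (1 + (1/α) * ((b - a * |d|)/t / c ^ α - 1)) = b/a + (1 - 1/α) * c := by
      rw [hcα, haA]
      field_simp
      ring
    linarith
  rw [hval]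
  exact key
end

section
/- Let a > 0, t > 0, b ≥ 0 and α > 1, and set g(d) = d + ((b − a·|d|)/t)^(1/α) on [−b/a, b/a] with d* = b/a − (1/α)(a/(α t))^(1/(α−1)). If 0 ≤ d* then g is strictly increasing on (−b/a, d*) and strictly decreasing on (d*, b/a). -/
/-!
For `d ≤ 0` both summands of `g d = d + ((b + a d)/t)^(1/α)` increase. For `d ≥ 0` the substitution
`u = (b - a d)/t`, a decreasing change of variable, gives `g d = b/a + (u^p - (t/a) u)` with
`p = 1/α < 1`; the concave function `u ↦ u^p - c u` rises up to `u* = (p/c)^(1/(1-p))`, where its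
derivative `p u^(p-1) - c` vanishes, and falls afterwards. The point `u = u*` corresponds to `d = d*`.
-/

open Real Set

section RpowSubMul

variable {p c : ℝ}

theorem rpow_one_div_one_sub_rpow_sub_one (hp0 : 0 < p) (hp1 : p < 1) (hc : 0 < c) :
    ((p / c) ^ (1 / (1 - p))) ^ (p - 1) = c / p := by
  have hexp : 1 / (1 - p) * (p - 1) = -1 := by
    field_simp [(sub_pos.2 hp1).ne']
    ring
  rw [← rpow_mul (div_pos hp0 hc).le, hexp, rpow_neg_one, inv_div]

theorem hasDerivAt_rpow_sub_mul {u : ℝ} (hu : u ≠ 0) :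
    HasDerivAt (fun u : ℝ => u ^ p - c * u) (p * u ^ (p - 1) - c) u := by
  simpa only [mul_one] using
    (hasDerivAt_rpow_const (p := p) (Or.inl hu)).fun_sub ((hasDerivAt_id' u).const_mul c)

theorem continuous_rpow_sub_mul (hp : 0 ≤ p) : Continuous fun u : ℝ => u ^ p - c * u :=
  (continuous_rpow_const hp).sub (continuous_const_mul c)

theorem strictMonoOn_rpow_sub_mul (hp0 : 0 < p) (hp1 : p < 1) (hc : 0 < c) :
    StrictMonoOn (fun u : ℝ => u ^ p - c * u) (Icc 0 ((p / c) ^ (1 / (1 - p)))) := by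
  refine strictMonoOn_of_deriv_pos (convex_Icc _ _)
    (continuous_rpow_sub_mul hp0.le).continuousOn fun u hu => ?_
  rw [interior_Icc] at hu
  rw [(hasDerivAt_rpow_sub_mul hu.1.ne').deriv, sub_pos]
  calc c = p * ((p / c) ^ (1 / (1 - p))) ^ (p - 1) := by
        rw [rpow_one_div_one_sub_rpow_sub_one hp0 hp1 hc]; field_simp
    _ < p * u ^ (p - 1) :=
        mul_lt_mul_of_pos_left (rpow_lt_rpow_of_neg hu.1 hu.2 (by linarith)) hp0

theorem strictAntiOn_rpow_sub_mul (hp0 : 0 < p) (hp1 : p < 1) (hc : 0 < c) :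
    StrictAntiOn (fun u : ℝ => u ^ p - c * u) (Ici ((p / c) ^ (1 / (1 - p)))) := by
  refine strictAntiOn_of_deriv_neg (convex_Ici _)
    (continuous_rpow_sub_mul hp0.le).continuousOn fun u hu => ?_
  rw [interior_Ici] at hu
  have hu0 : 0 < u := lt_trans (by positivity) hu
  rw [(hasDerivAt_rpow_sub_mul hu0.ne').deriv, sub_neg]
  calc p * u ^ (p - 1) < p * ((p / c) ^ (1 / (1 - p))) ^ (p - 1) :=
        mul_lt_mul_of_pos_left (rpow_lt_rpow_of_neg (by positivity) hu (by linarith)) hp0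
    _ = c := by rw [rpow_one_div_one_sub_rpow_sub_one hp0 hp1 hc]; field_simp

end RpowSubMul

section RightReach

variable {a t b p : ℝ}

theorem add_rpow_sub_mul_div_eq (ha : a ≠ 0) (ht : t ≠ 0) :
    (fun d : ℝ => d + ((b - a * d) / t) ^ p) =
      fun d => b / a + (fun u : ℝ => u ^ p - t / a * u) ((b - a * d) / t) := by
  funext d
  field_simp
  ring

theorem strictAnti_sub_mul_div (ha : 0 < a) (ht : 0 < t) :
    StrictAnti fun d : ℝ => (b - a * d) / t :=
  fun _ _ hxy => div_lt_div_of_pos_right (by nlinarith) ht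

theorem strictMonoOn_add_rpow_sub_mul_div (ha : 0 < a) (ht : 0 < t) (hp0 : 0 < p) (hp1 : p < 1) :
    StrictMonoOn (fun d : ℝ => d + ((b - a * d) / t) ^ p)
      (Iic ((b - t * (p / (t / a)) ^ (1 / (1 - p))) / a)) := by
  have hmaps : MapsTo (fun d : ℝ => (b - a * d) / t)
      (Iic ((b - t * (p / (t / a)) ^ (1 / (1 - p))) / a)) (Ici ((p / (t / a)) ^ (1 / (1 - p)))) := by
    intro d hd
    rw [mem_Iic, le_div_iff₀ ha] at hd
    rw [mem_Ici, le_div_iff₀ ht]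
    linarith
  rw [add_rpow_sub_mul_div_eq ha.ne' ht.ne']
  exact ((strictAntiOn_rpow_sub_mul hp0 hp1 (div_pos ht ha)).comp
    ((strictAnti_sub_mul_div ha ht).strictAntiOn _) hmaps).const_add _

theorem strictAntiOn_add_rpow_sub_mul_div (ha : 0 < a) (ht : 0 < t) (hp0 : 0 < p) (hp1 : p < 1) :
    StrictAntiOn (fun d : ℝ => d + ((b - a * d) / t) ^ p)
      (Icc ((b - t * (p / (t / a)) ^ (1 / (1 - p))) / a) (b / a)) := by
  have hmaps : MapsTo (fun d : ℝ => (b - a * d) / t)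
      (Icc ((b - t * (p / (t / a)) ^ (1 / (1 - p))) / a) (b / a))
      (Icc 0 ((p / (t / a)) ^ (1 / (1 - p)))) := by
    rintro d ⟨hd₁, hd₂⟩
    rw [div_le_iff₀ ha] at hd₁
    rw [le_div_iff₀ ha] at hd₂
    refine ⟨div_nonneg (by linarith) ht.le, ?_⟩
    rw [div_le_iff₀ ht]
    linarith
  rw [add_rpow_sub_mul_div_eq ha.ne' ht.ne']
  exact ((strictMonoOn_rpow_sub_mul hp0 hp1 (div_pos ht ha)).comp_strictAntiOn
    ((strictAnti_sub_mul_div ha ht).strictAntiOn _) hmaps).const_add _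

theorem strictMonoOn_add_rpow_sub_mul_abs_div (ha : 0 < a) (ht : 0 < t) (hp : 0 ≤ p) :
    StrictMonoOn (fun d : ℝ => d + ((b - a * |d|) / t) ^ p) (Icc (-(b / a)) 0) := by
  refine strictMono_id.strictMonoOn _ |>.add_monotone fun x hx y hy hxy => ?_
  have hxb : -x * a ≤ b := (le_div_iff₀ ha).1 (neg_le.1 hx.1)
  simp only [abs_of_nonpos hx.2, abs_of_nonpos hy.2, mul_neg, sub_neg_eq_add]
  have hbase : 0 ≤ (b + a * x) / t := div_nonneg (by linarith) ht.le
  gcongr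

end RightReach

theorem right_reach_unimodal_general (a t b α : ℝ) (ha : 0 < a) (ht : 0 < t) (hα : 1 < α)
    (dstar : ℝ) (hd : dstar = b/a - (1/α) * (a/(α*t)) ^ (1/(α-1)))
    (hd0 : 0 ≤ dstar) :
    StrictMonoOn (fun d : ℝ => d + ((b - a * |d|)/t) ^ (1/α)) (Set.Ioo (-(b/a)) dstar) ∧
    StrictAntiOn (fun d : ℝ => d + ((b - a * |d|)/t) ^ (1/α)) (Set.Ioo dstar (b/a)) := by
  have hp0 : 0 < 1 / α := by positivity
  have hp1 : 1 / α < 1 := (div_lt_one (by linarith)).2 hα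
  have hcrit : (b - t * (1 / α / (t / a)) ^ (1 / (1 - 1 / α))) / a = dstar := by
    have hk : 1 / α / (t / a) = a / (α * t) := by field_simp
    have hexp : 1 / (1 - 1 / α) = 1 + 1 / (α - 1) := by
      field_simp [(sub_pos.2 hα).ne']
      ring
    rw [hd, hk, hexp, rpow_add (by positivity), rpow_one]
    field_simp
  have hmono := strictMonoOn_add_rpow_sub_mul_div (b := b) ha ht hp0 hp1
  have hanti := strictAntiOn_add_rpow_sub_mul_div (b := b) ha ht hp0 hp1
  rw [hcrit] at hmono hanti
  have habs : EqOn (fun d : ℝ => d + ((b - a * d) / t) ^ (1 / α))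
      (fun d : ℝ => d + ((b - a * |d|) / t) ^ (1 / α)) (Ici 0) := fun d hd => by
    simp only [abs_of_nonneg (mem_Ici.1 hd)]
  have hba : 0 ≤ b / a := hd0.trans (by
    rw [hd]; linarith [show 0 ≤ 1 / α * (a / (α * t)) ^ (1 / (α - 1)) by positivity])
  constructor
  · have hpos : StrictMonoOn (fun d : ℝ => d + ((b - a * |d|) / t) ^ (1 / α)) (Icc 0 dstar) :=
      (hmono.mono fun d hd => hd.2).congr (habs.mono fun d hd => hd.1)
    refine ((strictMonoOn_add_rpow_sub_mul_abs_div ha ht hp0.le).union hpos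
      ⟨⟨neg_nonpos.2 hba, le_rfl⟩, fun d hd => hd.2⟩ ⟨⟨le_rfl, hd0⟩, fun d hd => hd.1⟩).mono ?_
    intro d hd
    rcases le_total d 0 with h | h
    exacts [Or.inl ⟨hd.1.le, h⟩, Or.inr ⟨h, hd.2.le⟩]
  · exact (hanti.mono Ioo_subset_Icc_self).congr (habs.mono fun d hd => hd0.trans hd.1.le)

theorem right_reach_unimodal (a t b α : ℝ) (ha : 0 < a) (ht : 0 < t) (hb : 0 ≤ b) (hα : 1 < α)
    (dstar : ℝ) (hd : dstar = b/a - (1/α) * (a/(α*t)) ^ (1/(α-1)))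
    (hd0 : 0 ≤ dstar) :
    StrictMonoOn (fun d : ℝ => d + ((b - a * |d|)/t) ^ (1/α)) (Set.Ioo (-(b/a)) dstar) ∧
    StrictAntiOn (fun d : ℝ => d + ((b - a * |d|)/t) ^ (1/α)) (Set.Ioo dstar (b/a)) :=
  right_reach_unimodal_general a t b α ha ht hα dstar hd hd0
end

section
/- Let a > 0, α ≥ 1, and let a₁, …, aₙ be positive integers with B = ∑ᵢ aᵢ. Construct n+1 sensors all at position 1/2, with radii ρᵢ = aᵢ/(2(B+1)) for i ≤ n and ρ_{n+1} = 1/(2(B+1)), and batteries bᵢ = a·ρᵢ^α + a/2 for i ≤ n and b_{n+1} = a·ρ_{n+1}^α. If there exists I ⊆ {1,…,n} with ∑_{i∈I} aᵢ = B/2, then there exists a feasible deployment covering [0,1] with lifetime a. -/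
open Finset

noncomputable def preS {n : ℕ} (ρ : Fin n → ℝ) (S : Finset (Fin n)) (i : Fin n) : ℝ :=
  ∑ j ∈ S.filter (fun j => j < i), 2 * ρ j

lemma preS_nonneg {n : ℕ} (ρ : Fin n → ℝ) (S : Finset (Fin n)) (i : Fin n)
    (h : ∀ j ∈ S, 0 ≤ ρ j) : 0 ≤ preS ρ S i :=
  Finset.sum_nonneg fun j hj => by
    have := h j (Finset.mem_of_mem_filter j hj); linarith

lemma preS_add_le {n : ℕ} (ρ : Fin n → ℝ) (S : Finset (Fin n)) (i : Fin n)
    (hi : i ∈ S) (h : ∀ j ∈ S, 0 ≤ ρ j) :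
    preS ρ S i + 2 * ρ i ≤ ∑ j ∈ S, 2 * ρ j := by
  have hnot : i ∉ S.filter (fun j => j < i) := by simp
  have hins : insert i (S.filter (fun j => j < i)) ⊆ S := by
    intro j hj
    rcases Finset.mem_insert.mp hj with h' | h'
    · subst h'; exact hi
    · exact Finset.mem_of_mem_filter j h'
  have h1 : preS ρ S i + 2 * ρ i = ∑ j ∈ insert i (S.filter (fun j => j < i)), 2 * ρ j := by
    rw [Finset.sum_insert hnot, add_comm]; rfl
  rw [h1]
  refine Finset.sum_le_sum_of_subset_of_nonneg hins ?_
  intro j hj _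
  have := h j hj; linarith

lemma cover_aux {n : ℕ} (ρ : Fin n → ℝ) :
    ∀ (S : Finset (Fin n)), (∀ i ∈ S, 0 < ρ i) → S.Nonempty → ∀ (c : ℝ),
    Set.Icc c (c + ∑ i ∈ S, 2 * ρ i) ⊆
      ⋃ i ∈ S, Set.Icc (c + preS ρ S i) (c + preS ρ S i + 2 * ρ i) := by
  intro S
  induction S using Finset.strongInduction with
  | _ S ih =>
    intro hρ hS c x hx
    have hi0S : S.min' hS ∈ S := S.min'_mem hS
    set i0 := S.min' hS with hi0
    have hpre0 : preS ρ S i0 = 0 := by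
      unfold preS
      rw [Finset.filter_false_of_mem, Finset.sum_empty]
      intro j hj
      exact not_lt.mpr (S.min'_le j hj)
    by_cases hxle : x ≤ c + 2 * ρ i0
    · refine Set.mem_iUnion₂.mpr ⟨i0, hi0S, ?_⟩
      rw [hpre0]
      exact ⟨by simpa using hx.1, by simpa using hxle⟩
    · push_neg at hxle
      set S' := S.erase i0 with hS'
      have hsum : 2 * ρ i0 + ∑ j ∈ S', 2 * ρ j = ∑ j ∈ S, 2 * ρ j :=
        Finset.add_sum_erase S (fun j => 2 * ρ j) hi0S
      have hS'ne : S'.Nonempty := by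
        rcases Finset.eq_empty_or_nonempty S' with h | h
        · exfalso
          have hsingle : S = {i0} := by
            rcases (Finset.erase_eq_empty_iff S i0).mp h with h' | h'
            · exact absurd (h' ▸ hi0S) (Finset.notMem_empty i0)
            · exact h'
          have heq : ∑ j ∈ S, 2 * ρ j = 2 * ρ i0 := by rw [hsingle, Finset.sum_singleton]
          have h2 := hx.2
          rw [heq] at h2
          linarith
        · exact h
      have hss : S' ⊂ S := Finset.erase_ssubset hi0S
      have hres := ih S' hss (fun j hj => hρ j (Finset.mem_of_mem_erase hj)) hS'ne
        (c + 2 * ρ i0) ⟨le_of_lt hxle, by linarith [hx.2]⟩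
      obtain ⟨j, hjS', hxj⟩ := Set.mem_iUnion₂.mp hres
      have hjS : j ∈ S := Finset.mem_of_mem_erase hjS'
      have hi0j : i0 < j := lt_of_le_of_ne (S.min'_le j hjS) (Ne.symm (Finset.ne_of_mem_erase hjS'))
      have hfil : S.filter (fun k => k < j) = insert i0 (S'.filter (fun k => k < j)) := by
        ext k
        simp only [Finset.mem_filter, Finset.mem_insert, hS', Finset.mem_erase]
        constructor
        · rintro ⟨hkS, hkj⟩
          by_cases hk : k = i0
          · exact Or.inl hk
          · exact Or.inr ⟨⟨hk, hkS⟩, hkj⟩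
        · rintro (h | ⟨⟨_, hkS⟩, hkj⟩)
          · exact ⟨h ▸ hi0S, h ▸ hi0j⟩
          · exact ⟨hkS, hkj⟩
      have hnot : i0 ∉ S'.filter (fun k => k < j) := by
        simp [hS']
      have hpre : preS ρ S j = 2 * ρ i0 + preS ρ S' j := by
        unfold preS
        rw [hfil, Finset.sum_insert hnot]
      refine Set.mem_iUnion₂.mpr ⟨j, hjS, ?_⟩
      rw [hpre]
      exact ⟨by linarith [hxj.1], by linarith [hxj.2]⟩

set_option maxHeartbeats 1000000 in
theorem partition_reduction_forward (n : ℕ) (a α : ℝ) (ha : 0 < a) (hα : 1 ≤ α)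
    (w : Fin n → ℕ) (hw : ∀ i, 0 < w i) (B : ℕ) (hB : B = ∑ i, w i)
    (ρ bat : Fin (n+1) → ℝ)
    (hρ : ∀ i : Fin n, ρ i.castSucc = (w i : ℝ) / (2*((B:ℝ)+1)))
    (hρl : ρ (Fin.last n) = 1 / (2*((B:ℝ)+1)))
    (hbat : ∀ i : Fin n, bat i.castSucc = a * ρ i.castSucc ^ α + a/2)
    (hbatl : bat (Fin.last n) = a * ρ (Fin.last n) ^ α)
    (I : Finset (Fin n)) (hI : ∑ i ∈ I, (w i : ℝ) = (B:ℝ)/2) :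
    ∃ y r : Fin (n+1) → ℝ,
      (∀ i, r i = 0 ∨ r i = ρ i) ∧
      (∀ i, a * |y i - 1/2| + a * r i ^ α ≤ bat i) ∧
      Set.Icc (0:ℝ) 1 ⊆ ⋃ i, Set.Icc (y i - r i) (y i + r i) := by
  have hBpos : (0:ℝ) < (B:ℝ) + 1 := by positivity
  rcases Nat.eq_zero_or_pos n with hn | hn
  · -- n = 0 case
    subst hn
    refine ⟨fun _ => 1/2, ρ, fun i => Or.inr rfl, ?_, ?_⟩
    · intro i
      have hi : i = Fin.last 0 := by
        have := i.isLt
        exact Fin.ext (by omega)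
      subst hi
      rw [hbatl]
      simp
    · intro x hx
      have hB0 : B = 0 := by simp [hB]
      refine Set.mem_iUnion.mpr ⟨Fin.last 0, ?_⟩
      rw [hρl, hB0]
      norm_num
      exact ⟨hx.1, hx.2⟩
  · -- n > 0
    have hB1 : 1 ≤ B := by
      have h0 := hw ⟨0, hn⟩
      have := Finset.single_le_sum (f := w) (fun i _ => Nat.zero_le _) (Finset.mem_univ ⟨0, hn⟩)
      omega
    have hBR : (1:ℝ) ≤ (B:ℝ) := by exact_mod_cast hB1
    set ρ' : Fin n → ℝ := fun i => ρ i.castSucc with hρ'def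
    have hρ'pos : ∀ i, 0 < ρ' i := by
      intro i
      have hwi : (0:ℝ) < (w i : ℝ) := by exact_mod_cast hw i
      have : ρ' i = (w i : ℝ) / (2*((B:ℝ)+1)) := hρ i
      rw [this]
      positivity
    have hρ'nonneg : ∀ j ∈ (Finset.univ : Finset (Fin n)), 0 ≤ ρ' j := fun j _ => (hρ'pos j).le
    set ℓ : ℝ := 1 / (2*((B:ℝ)+1)) with hℓdef
    have hℓpos : 0 < ℓ := by positivity
    have hℓhalf : ℓ ≤ 1/2 := by
      rw [hℓdef, div_le_div_iff₀ (by positivity) (by norm_num)]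
      linarith
    -- sums
    have hsumgen : ∀ S : Finset (Fin n),
        ∑ i ∈ S, 2 * ρ' i = (∑ i ∈ S, (w i:ℝ)) / ((B:ℝ)+1) := by
      intro S
      rw [Finset.sum_div]
      refine Finset.sum_congr rfl fun i _ => ?_
      rw [show ρ' i = ρ i.castSucc from rfl, hρ i]
      field_simp
      try ring
    have hsumI : ∑ i ∈ I, 2 * ρ' i = 1/2 - ℓ := by
      rw [hsumgen, hI, hℓdef]
      field_simp
      try ring
    have hIcsum : ∑ i ∈ Iᶜ, (w i : ℝ) = (B:ℝ)/2 := by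
      have h := Finset.sum_add_sum_compl I (fun i => (w i : ℝ))
      have hBsum : ∑ i, (w i : ℝ) = (B:ℝ) := by rw [hB]; push_cast; ring
      rw [hI, hBsum] at h
      linarith
    have hsumIc : ∑ i ∈ Iᶜ, 2 * ρ' i = 1/2 - ℓ := by
      rw [hsumgen, hIcsum, hℓdef]
      field_simp
      try ring
    have hIne : I.Nonempty := by
      rcases Finset.eq_empty_or_nonempty I with h | h
      · exfalso
        rw [h, Finset.sum_empty] at hI
        linarith
      · exact h
    have hIcne : Iᶜ.Nonempty := by
      rcases Finset.eq_empty_or_nonempty Iᶜ with h | h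
      · exfalso
        rw [h, Finset.sum_empty] at hIcsum
        linarith
      · exact h
    -- define positions
    set y : Fin (n+1) → ℝ := Fin.lastCases (1/2)
      (fun i => if i ∈ I then preS ρ' I i + ρ' i else 1/2 + ℓ + preS ρ' Iᶜ i + ρ' i) with hy
    have hylast : y (Fin.last n) = 1/2 := by rw [hy]; simp
    have hyI : ∀ i : Fin n, i ∈ I → y i.castSucc = preS ρ' I i + ρ' i := by
      intro i hi; rw [hy]; simp [hi]
    have hyIc : ∀ i : Fin n, i ∉ I → y i.castSucc = 1/2 + ℓ + preS ρ' Iᶜ i + ρ' i := by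
      intro i hi; rw [hy]; simp [hi]
    refine ⟨y, ρ, fun i => Or.inr rfl, ?_, ?_⟩
    · -- battery
      intro i
      induction i using Fin.lastCases with
      | last =>
        rw [hylast, hbatl]
        simp
      | cast i =>
        rw [hbat i]
        have hyb : 0 ≤ y i.castSucc ∧ y i.castSucc ≤ 1 := by
          by_cases hi : i ∈ I
          · rw [hyI i hi]
            have h1 := preS_nonneg ρ' I i (fun j _ => (hρ'pos j).le)
            have h2 := preS_add_le ρ' I i hi (fun j _ => (hρ'pos j).le)
            rw [hsumI] at h2
            have := hρ'pos i
            constructor <;> nlinarith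
          · have hi' : i ∈ Iᶜ := Finset.mem_compl.mpr hi
            rw [hyIc i hi]
            have h1 := preS_nonneg ρ' Iᶜ i (fun j _ => (hρ'pos j).le)
            have h2 := preS_add_le ρ' Iᶜ i hi' (fun j _ => (hρ'pos j).le)
            rw [hsumIc] at h2
            have := hρ'pos i
            constructor <;> nlinarith
        have habs : |y i.castSucc - 1/2| ≤ 1/2 := abs_le.mpr ⟨by linarith [hyb.1], by linarith [hyb.2]⟩
        have : a * |y i.castSucc - 1/2| ≤ a * (1/2) :=
          mul_le_mul_of_nonneg_left habs ha.le
        linarith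
    · -- coverage
      intro x hx
      rcases le_or_gt x (1/2 - ℓ) with hxl | hxl
      · have hmem : x ∈ Set.Icc (0:ℝ) (0 + ∑ i ∈ I, 2 * ρ' i) := by
          rw [hsumI]
          exact ⟨hx.1, by linarith⟩
        obtain ⟨i, hiI, hxi⟩ := Set.mem_iUnion₂.mp
          (cover_aux ρ' I (fun j _ => hρ'pos j) hIne 0 hmem)
        refine Set.mem_iUnion.mpr ⟨i.castSucc, ?_⟩
        rw [hyI i hiI]
        have hrr : ρ i.castSucc = ρ' i := rfl
        rw [hrr]
        exact ⟨by linarith [hxi.1], by linarith [hxi.2]⟩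
      · rcases le_or_gt x (1/2 + ℓ) with hxr | hxr
        · refine Set.mem_iUnion.mpr ⟨Fin.last n, ?_⟩
          rw [hylast, hρl]
          exact ⟨by linarith, by linarith⟩
        · have hmem : x ∈ Set.Icc (1/2 + ℓ) ((1/2 + ℓ) + ∑ i ∈ Iᶜ, 2 * ρ' i) := by
            rw [hsumIc]
            exact ⟨hxr.le, by linarith [hx.2]⟩
          obtain ⟨i, hiIc, hxi⟩ := Set.mem_iUnion₂.mp
            (cover_aux ρ' Iᶜ (fun j _ => hρ'pos j) hIcne (1/2 + ℓ) hmem)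
          have hiI : i ∉ I := Finset.mem_compl.mp hiIc
          refine Set.mem_iUnion.mpr ⟨i.castSucc, ?_⟩
          rw [hyIc i hiI]
          have hrr : ρ i.castSucc = ρ' i := rfl
          rw [hrr, Set.mem_Icc]
          rw [Set.mem_Icc] at hxi
          constructor <;> linarith [hxi.1, hxi.2]
end

section
/- With the construction of the previous statement (sensors at 1/2, radii ρᵢ = aᵢ/(2(B+1)) and ρ_{n+1} = 1/(2(B+1)), batteries bᵢ = a·ρᵢ^α + a/2 for i ≤ n and b_{n+1} = a·ρ_{n+1}^α, with α ≥ 1 and a > 0): if a feasible pair (y, r) with rᵢ ∈ {0, ρᵢ} covers [0,1] with strictly positive lifetime, then rᵢ = ρᵢ for all i, sensor n+1 remains at y_{n+1} = 1/2, and there exists I ⊆ {1,…,n} with ∑_{i∈I} aᵢ = B/2. -/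
/-!
The radii sum to `1/2`, so the sensing intervals have total length exactly `1` and cover `[0, 1]`
without slack: every sensor must be switched on, and two distinct intervals meet in at most a point.
Sensor `n+1` can afford a displacement of less than `ρₙ₊₁ ^ α ≤ ρₙ₊₁ = u := 1/(2(B+1))`, so its
interval `[y - u, y + u]` contains `1/2`. The intervals to its left tile `[0, y - u]`, whence
`y = (2W + 1) u` with `W` the total weight of the sensors placed there; since `|y - 1/2| < u` and
`1/2 = (B + 1) u`, this forces `2W = B` and `y = 1/2`.
-/

open MeasureTheory Set Finset

theorem measureReal_le_sum_length_of_subset_biUnion_Icc {ι : Type*} {S : Set ℝ}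
    (s : Finset ι) {l h : ι → ℝ} (hlh : ∀ i ∈ s, l i ≤ h i)
    (hS : S ⊆ ⋃ i ∈ s, Icc (l i) (h i)) :
    volume.real S ≤ ∑ i ∈ s, (h i - l i) :=
  calc volume.real S ≤ volume.real (⋃ i ∈ s, Icc (l i) (h i)) :=
        measureReal_mono hS (measure_biUnion_lt_top s.finite_toSet fun _ _ => measure_Icc_lt_top).ne
    _ ≤ ∑ i ∈ s, volume.real (Icc (l i) (h i)) := measureReal_biUnion_finset_le _ _
    _ = ∑ i ∈ s, (h i - l i) := sum_congr rfl fun i hi => Real.volume_real_Icc_of_le (hlh i hi)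

section TightCover

variable {ι : Type*} [Fintype ι] {a b : ℝ} {l h : ι → ℝ}

theorem sub_le_sum_length_of_subset_iUnion_Icc (hlh : ∀ i, l i ≤ h i)
    (hcov : Icc a b ⊆ ⋃ i, Icc (l i) (h i)) : b - a ≤ ∑ i, (h i - l i) :=
  calc b - a ≤ volume.real (Icc a b) := by rw [Real.volume_real_Icc]; exact le_max_left _ _
    _ ≤ ∑ i, (h i - l i) :=
      measureReal_le_sum_length_of_subset_biUnion_Icc _ (fun i _ => hlh i) (by simpa using hcov)

theorem eq_of_le_of_Icc_subset_iUnion {y r ρ : ι → ℝ} (hr : ∀ i, 0 ≤ r i) (hrρ : ∀ i, r i ≤ ρ i)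
    (hcov : Icc a b ⊆ ⋃ i, Icc (y i - r i) (y i + r i)) (hρ : ∑ i, 2 * ρ i ≤ b - a) (i : ι) :
    r i = ρ i := by
  have hle := sub_le_sum_length_of_subset_iUnion_Icc (fun i => by linarith [hr i]) hcov
  have hzero : ∑ i, (ρ i - r i) = 0 := by
    refine le_antisymm ?_ (sum_nonneg fun i _ => sub_nonneg.2 (hrρ i))
    simp only [add_sub_sub_cancel, ← two_mul, ← mul_sum] at hle hρ
    rw [sum_sub_distrib]
    linarith
  linarith [(sum_eq_zero_iff_of_nonneg fun i _ => sub_nonneg.2 (hrρ i)).1 hzero i (mem_univ i)]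

variable [DecidableEq ι]

theorem min_le_max_of_tight_cover (hlh : ∀ i, l i ≤ h i) (hcov : Icc a b ⊆ ⋃ i, Icc (l i) (h i))
    (htight : ∑ i, (h i - l i) ≤ b - a) {j k : ι} (hjk : j ≠ k) :
    min (h j) (h k) ≤ max (l j) (l k) := by
  set rest : Finset ι := Finset.univ \ {j, k}
  have hsub : Icc a b ⊆ (Icc (l j) (h j) ∪ Icc (l k) (h k)) ∪ ⋃ i ∈ rest, Icc (l i) (h i) := by
    intro x hx
    obtain ⟨i, hi⟩ := mem_iUnion.1 (hcov hx)
    by_cases hijk : i ∈ ({j, k} : Finset ι)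
    · rcases mem_insert.1 hijk with rfl | hik
      · exact Or.inl (Or.inl hi)
      · exact Or.inl (Or.inr (mem_singleton.1 hik ▸ hi))
    · exact Or.inr (mem_iUnion₂.2 ⟨i, mem_sdiff.2 ⟨mem_univ i, hijk⟩, hi⟩)
  have hunion : volume.real (Icc (l j) (h j) ∪ Icc (l k) (h k))
      = (h j - l j) + (h k - l k) - volume.real (Icc (l j) (h j) ∩ Icc (l k) (h k)) := by
    rw [eq_sub_iff_add_eq, measureReal_union_add_inter measurableSet_Icc measure_Icc_lt_top.ne
        measure_Icc_lt_top.ne,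
      Real.volume_real_Icc_of_le (hlh j), Real.volume_real_Icc_of_le (hlh k)]
  have hcover : b - a ≤ volume.real (Icc (l j) (h j) ∪ Icc (l k) (h k)) + ∑ i ∈ rest, (h i - l i) :=
    calc b - a ≤ volume.real (Icc a b) := by rw [Real.volume_real_Icc]; exact le_max_left _ _
      _ ≤ volume.real ((Icc (l j) (h j) ∪ Icc (l k) (h k)) ∪ ⋃ i ∈ rest, Icc (l i) (h i)) :=
        measureReal_mono hsub (((isCompact_Icc.union isCompact_Icc).union
          (rest.isCompact_biUnion fun _ _ => isCompact_Icc)).measure_lt_top.ne)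
      _ ≤ _ := (measureReal_union_le _ _).trans (add_le_add_right
        (measureReal_le_sum_length_of_subset_biUnion_Icc _ (fun i _ => hlh i) subset_rfl) _)
  have hsplit : ∑ i, (h i - l i) = ∑ i ∈ rest, (h i - l i) + ((h j - l j) + (h k - l k)) := by
    rw [← sum_pair (f := fun i => h i - l i) hjk, sum_sdiff (subset_univ _)]
  -- inclusion–exclusion: the overlap of `j` and `k` is counted twice, which the budget cannot afford
  have hinter : volume.real (Icc (l j) (h j) ∩ Icc (l k) (h k)) ≤ 0 := by linarith
  rw [Icc_inter_Icc, Real.volume_real_Icc] at hinter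
  linarith [le_max_left (min (h j) (h k) - max (l j) (l k)) 0]

theorem sum_filter_length_eq_sub_of_tight_cover (hlh : ∀ i, l i ≤ h i)
    (hcov : Icc a b ⊆ ⋃ i, Icc (l i) (h i)) (htight : ∑ i, (h i - l i) ≤ b - a) {k : ι}
    (hk : l k < h k) (hka : a ≤ h k) (hkb : l k ≤ b) :
    ∑ i ∈ Finset.univ.filter (fun i => h i ≤ l k), (h i - l i) = l k - a := by
  set L := Finset.univ.filter (fun i => h i ≤ l k)
  set R := Finset.univ.filter (fun i => ¬h i ≤ l k)
  have hkR : k ∈ R := mem_filter.2 ⟨mem_univ k, hk.not_ge⟩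
  have hleft : l k - a ≤ ∑ i ∈ L, (h i - l i) := by
    refine (le_max_left _ 0).trans (Real.volume_real_Ico (a := a) ▸
      measureReal_le_sum_length_of_subset_biUnion_Icc L (fun i _ => hlh i) ?_)
    rintro x ⟨hax, hxk⟩
    obtain ⟨i, hli, hhi⟩ := mem_iUnion.1 (hcov ⟨hax, hxk.le.trans hkb⟩)
    have hik : i ≠ k := fun hik => (hik ▸ hli).not_gt hxk
    have hdisj := min_le_max_of_tight_cover hlh hcov htight hik
    rw [max_eq_right (hli.trans hxk.le)] at hdisj
    refine mem_iUnion₂.2 ⟨i, mem_filter.2 ⟨mem_univ i, ?_⟩, hli, hhi⟩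
    rcases min_le_iff.1 hdisj with hi | hk'
    · exact hi
    · exact absurd hk' hk.not_ge
  have hright : b - h k ≤ ∑ i ∈ R.erase k, (h i - l i) := by
    refine (le_max_left _ 0).trans (Real.volume_real_Ioc (b := b) ▸
      measureReal_le_sum_length_of_subset_biUnion_Icc _ (fun i _ => hlh i) ?_)
    rintro x ⟨hkx, hxb⟩
    obtain ⟨i, hli, hhi⟩ := mem_iUnion.1 (hcov ⟨hka.trans hkx.le, hxb⟩)
    have hik : i ≠ k := fun hik => (hik ▸ hhi).not_gt hkx
    refine mem_iUnion₂.2 ⟨i, mem_erase.2 ⟨hik, mem_filter.2 ⟨mem_univ i, ?_⟩⟩, hli, hhi⟩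
    intro hil
    linarith
  have hsplit : ∑ i ∈ L, (h i - l i) + ((h k - l k) + ∑ i ∈ R.erase k, (h i - l i))
      = ∑ i, (h i - l i) := by
    rw [add_sum_erase R (fun i => h i - l i) hkR, sum_filter_add_sum_filter_not]
  linarith

end TightCover

theorem lt_of_mul_add_mul_rpow_le {a t d u α : ℝ} (ha : 0 < a) (ht : 0 < t) (hu : 0 < u)
    (hu1 : u ≤ 1) (hα : 1 ≤ α) (h : a * d + t * u ^ α ≤ a * u ^ α) : d < u := by
  have hdu : a * d < a * u ^ α := by linarith [mul_pos ht (Real.rpow_pos_of_pos hu α)]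
  calc d < u ^ α := lt_of_mul_lt_mul_left hdu ha.le
    _ ≤ u := Real.rpow_le_self_of_le_one hu.le hu1 hα

theorem Nat.eq_of_abs_cast_mul_sub_lt {m k : ℕ} {u : ℝ} (hu : 0 < u)
    (h : |(m : ℝ) * u - k * u| < u) : m = k := by
  rw [← sub_mul, abs_mul, abs_of_pos hu] at h
  have h1 : |((m : ℤ) - k : ℤ)| < 1 := by
    exact_mod_cast (mul_lt_iff_lt_one_left hu).1 h
  exact_mod_cast sub_eq_zero.1 (Int.abs_lt_one_iff.1 h1)

theorem sum_eq_succ_mul_of_castSucc_of_last {n B : ℕ} {w : Fin n → ℕ} {ρ : Fin (n + 1) → ℝ}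
    {u : ℝ} (hB : B = ∑ i, w i) (hρ : ∀ i : Fin n, ρ i.castSucc = w i * u)
    (hρl : ρ (Fin.last n) = u) : ∑ i, ρ i = (B + 1) * u := by
  rw [Fin.sum_univ_castSucc, hρl]
  simp only [hρ, ← sum_mul, ← Nat.cast_sum, ← hB]
  ring

theorem eq_half_of_odd_mul_near_half {W B : ℕ} {u Y : ℝ} (hu : 0 < u)
    (hBu : (B + 1) * u = 1 / 2) (hW : (2 * W + 1) * u = Y) (hY : |Y - 1 / 2| < u) :
    Y = 1 / 2 ∧ 2 * (W : ℝ) = B := by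
  have h : 2 * W + 1 = B + 1 :=
    Nat.eq_of_abs_cast_mul_sub_lt hu (by push_cast; rwa [hW, hBu])
  have h' : 2 * (W : ℝ) + 1 = B + 1 := by exact_mod_cast h
  constructor
  · rw [← hW, ← hBu, h']
  · linarith

theorem partition_reduction_backward_general (n : ℕ) (a α : ℝ) (ha : 0 < a) (hα : 1 ≤ α)
    (w : Fin n → ℕ) (B : ℕ) (hB : B = ∑ i, w i)
    (ρ bat : Fin (n+1) → ℝ)
    (hρ : ∀ i : Fin n, ρ i.castSucc = (w i : ℝ) / (2*((B:ℝ)+1)))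
    (hρl : ρ (Fin.last n) = 1 / (2*((B:ℝ)+1)))
    (hbatl : bat (Fin.last n) = a * ρ (Fin.last n) ^ α)
    (y r : Fin (n+1) → ℝ)
    (hr : ∀ i, r i = 0 ∨ r i = ρ i)
    (t : ℝ) (ht : 0 < t)
    (henergy : ∀ i, a * |y i - 1/2| + t * r i ^ α ≤ bat i)
    (hcover : Set.Icc (0:ℝ) 1 ⊆ ⋃ i, Set.Icc (y i - r i) (y i + r i)) :
    (∀ i, r i = ρ i) ∧ y (Fin.last n) = 1/2 ∧
    ∃ I : Finset (Fin n), ∑ i ∈ I, (w i : ℝ) = (B:ℝ)/2 := by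
  set u : ℝ := 1 / (2*((B:ℝ)+1)) with hu
  have hu0 : 0 < u := by positivity
  have hBu : ((B : ℝ) + 1) * u = 1 / 2 := by rw [hu]; field_simp
  have hρw : ∀ i : Fin n, ρ i.castSucc = w i * u := fun i => by rw [hρ, hu, mul_one_div]
  have hρ0 : ∀ i, 0 ≤ ρ i := Fin.lastCases (hρl ▸ hu0.le) fun i => hρw i ▸ by positivity
  have hlen : ∑ i, 2 * ρ i = 1 := by
    rw [← mul_sum, sum_eq_succ_mul_of_castSucc_of_last hB hρw hρl, hBu]; norm_num
  have hrρ : ∀ i, r i = ρ i := by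
    refine eq_of_le_of_Icc_subset_iUnion (fun i => ?_) (fun i => ?_) hcover (by rw [hlen]; norm_num)
    all_goals rcases hr i with h | h <;> simp [h, hρ0 i]
  simp only [hrρ] at hcover henergy
  have hY : |y (Fin.last n) - 1 / 2| < u :=
    lt_of_mul_add_mul_rpow_le ha ht hu0 (by linarith [mul_nonneg (Nat.cast_nonneg B) hu0.le]) hα
      (hρl ▸ hbatl ▸ henergy (Fin.last n))
  obtain ⟨hYl, hYr⟩ := abs_lt.1 hY
  -- the sensors entirely to the left of sensor `n+1` have total length `y (Fin.last n) - u`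
  have hleft := sum_filter_length_eq_sub_of_tight_cover (l := fun i => y i - ρ i)
    (h := fun i => y i + ρ i) (k := Fin.last n) (fun i => by linarith [hρ0 i]) hcover
    (by simp only [add_sub_sub_cancel, ← two_mul, hlen]; norm_num)
    (by rw [hρl]; linarith) (by rw [hρl]; linarith) (by rw [hρl]; linarith)
  rw [sum_filter, Fin.sum_univ_castSucc, hρl, if_neg (by linarith), ← sum_filter] at hleft
  set I := Finset.univ.filter fun j : Fin n => y j.castSucc + ρ j.castSucc ≤ y (Fin.last n) - u
  obtain ⟨hYhalf, hIhalf⟩ := eq_half_of_odd_mul_near_half (W := ∑ j ∈ I, w j) hu0 hBu (by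
    simp only [add_sub_sub_cancel, ← two_mul, hρw, ← mul_sum, ← sum_mul] at hleft
    push_cast
    linarith) hY
  exact ⟨hrρ, hYhalf, I, by push_cast at hIhalf; linarith⟩

theorem partition_reduction_backward (n : ℕ) (a α : ℝ) (ha : 0 < a) (hα : 1 ≤ α)
    (w : Fin n → ℕ) (hw : ∀ i, 0 < w i) (B : ℕ) (hB : B = ∑ i, w i)
    (ρ bat : Fin (n+1) → ℝ)
    (hρ : ∀ i : Fin n, ρ i.castSucc = (w i : ℝ) / (2*((B:ℝ)+1)))
    (hρl : ρ (Fin.last n) = 1 / (2*((B:ℝ)+1)))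
    (hbat : ∀ i : Fin n, bat i.castSucc = a * ρ i.castSucc ^ α + a/2)
    (hbatl : bat (Fin.last n) = a * ρ (Fin.last n) ^ α)
    (y r : Fin (n+1) → ℝ)
    (hr : ∀ i, r i = 0 ∨ r i = ρ i)
    (t : ℝ) (ht : 0 < t)
    (henergy : ∀ i, a * |y i - 1/2| + t * r i ^ α ≤ bat i)
    (hcover : Set.Icc (0:ℝ) 1 ⊆ ⋃ i, Set.Icc (y i - r i) (y i + r i)) :
    (∀ i, r i = ρ i) ∧ y (Fin.last n) = 1/2 ∧
    ∃ I : Finset (Fin n), ∑ i ∈ I, (w i : ℝ) = (B:ℝ)/2 :=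
  partition_reduction_backward_general n a α ha hα w B hB ρ bat hρ hρl hbatl y r hr t ht henergy
    hcover
end

section
/- Suppose two sensors i and j start at the same point, battery β_i' for i and β_j' for j after movement, with β_i < β_i', β_j' < β_j (where β_i, β_j are the post-movement batteries in an alternative configuration), β_i < β_j' and β_i' < β_j, and β_i' + β_j' > β_i + β_j. Then for any α ≥ 1 and t > 0, (β_i'/t)^(1/α) + (β_j'/t)^(1/α) > (β_i/t)^(1/α) + (β_j/t)^(1/α). -/
lemma concave_increment {f : ℝ → ℝ} (hf : ConcaveOn ℝ (Set.Ici 0) f)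
    {x u d : ℝ} (hx : 0 ≤ x) (hxu : x ≤ u) (hd : 0 ≤ d) :
    f (u + d) + f x ≤ f (x + d) + f u := by
  rcases eq_or_lt_of_le (by linarith : x ≤ u + d) with h | h
  · have hd0 : d = 0 := by linarith
    have hxu0 : x = u := by linarith
    subst hd0; subst hxu0; simp
  · set T := u + d - x with hT
    have hTpos : 0 < T := by simp only [hT]; linarith
    set a := d / T with ha
    have ha0 : 0 ≤ a := div_nonneg hd hTpos.le
    have ha1 : a ≤ 1 := by
      rw [ha, div_le_one hTpos]; linarith
    have haT : a * T = d := div_mul_cancel₀ d hTpos.ne'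
    have hmx : (x : ℝ) ∈ Set.Ici (0:ℝ) := hx
    have hmud : (u + d : ℝ) ∈ Set.Ici (0:ℝ) := by
      simp only [Set.mem_Ici]; linarith
    have h1 := hf.2 hmx hmud (by linarith : (0:ℝ) ≤ 1 - a) ha0 (by ring)
    have h2 := hf.2 hmx hmud ha0 (by linarith : (0:ℝ) ≤ 1 - a) (by ring)
    rw [smul_eq_mul, smul_eq_mul, smul_eq_mul, smul_eq_mul] at h1 h2
    have e1 : (1 - a) * x + a * (u + d) = x + d := by nlinarith [haT]
    have e2 : a * x + (1 - a) * (u + d) = u := by nlinarith [haT]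
    rw [e1] at h1
    rw [e2] at h2
    linarith

theorem battery_swap_inequality (α t βi βj βi' βj' : ℝ) (hα : 1 ≤ α) (ht : 0 < t)
    (h0 : 0 ≤ βi) (h1 : βi < βi') (h2 : βj' < βj) (h3 : βi < βj') (h4 : βi' < βj)
    (hsum : βi' + βj' > βi + βj) :
    (βi'/t) ^ (1/α) + (βj'/t) ^ (1/α) > (βi/t) ^ (1/α) + (βj/t) ^ (1/α) := by
  have hαpos : 0 < α := by linarith
  have hppos : 0 < 1/α := by positivity
  have hp1 : 1/α ≤ 1 := by
    rw [div_le_one hαpos]; linarith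
  set x := βi / t with hxd
  set x' := βi' / t with hx'd
  set y' := βj' / t with hy'd
  set y := βj / t with hyd
  have hx0 : 0 ≤ x := div_nonneg h0 ht.le
  have hxy' : x ≤ y' := by
    rw [hxd, hy'd]; gcongr
  have hd : 0 ≤ y - y' := by
    have : y' ≤ y := by rw [hyd, hy'd]; gcongr
    linarith
  have hsum' : x + (y - y') < x' := by
    have e : x + (y - y') = (βi + βj - βj') / t := by
      rw [hxd, hyd, hy'd]; field_simp; ring
    rw [e, hx'd]
    gcongr
    linarith
  have hinc := concave_increment (Real.concaveOn_rpow hppos.le hp1) hx0 hxy' hd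
  have ey : y' + (y - y') = y := by ring
  rw [ey] at hinc
  have hmono : (x + (y - y')) ^ (1/α) < x' ^ (1/α) :=
    Real.rpow_lt_rpow (by linarith) hsum' hppos
  linarith
end

section
/- Let α ≥ 1 be real, a > 0, Q ≥ 1 an integer, m ≥ 1, δ = 1/((2m−1)Q), and T = 2aQ·(2(2m−1)Q)^α. Then for any positive integer aᵢ, the battery bᵢ = T·(aᵢδ/2)^α + a satisfies bᵢ ≤ T·(aᵢδ/2)^α · ((2Q+1)/(2Q))^α, and hence (bᵢ/T)^(1/α) ≤ (aᵢδ/2)·((2Q+1)/(2Q)). -/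
/-!
With `c = 2(2m-1)Q` we have `kδ/2 = k/c` and `T = 2aQ·c^α`, so `T·(kδ/2)^α = 2aQ·k^α ≥ 2aQ`.
Hence the additive `a` is at most a `1/(2Q)` fraction of `T·(kδ/2)^α`, and Bernoulli's inequality
`1 + 1/(2Q) ≤ (1 + 1/(2Q))^α` absorbs it. Taking `α`-th roots gives the second bound.
-/

open Real

lemma rpow_mul_div_rpow_cancel {c k : ℝ} (hc : 0 < c) (hk : 0 ≤ k) (α : ℝ) :
    c ^ α * (k / c) ^ α = k ^ α := by
  rw [div_rpow hk hc.le, mul_div_cancel₀ _ (rpow_pos_of_pos hc α).ne']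

lemma add_le_mul_rpow_add_one_div {p a y α : ℝ} (hp : 0 < p) (ha : 0 ≤ a) (hy : a * p ≤ y)
    (hα : 1 ≤ α) : y + a ≤ y * ((p + 1) / p) ^ α := by
  have hy0 : 0 ≤ y := (mul_nonneg ha hp.le).trans hy
  have hr : 1 ≤ (p + 1) / p := by rw [le_div_iff₀ hp]; linarith
  have hay : a ≤ y / p := (le_div_iff₀ hp).mpr hy
  calc y + a ≤ y + y / p := by linarith
    _ = y * ((p + 1) / p) := by field_simp
    _ ≤ y * ((p + 1) / p) ^ α := mul_le_mul_of_nonneg_left (self_le_rpow_of_one_le hr hα) hy0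

theorem battery_radius_bound (Q m : ℕ) (hQ : 1 ≤ Q) (hm : 1 ≤ m)
    (α a : ℝ) (hα : 1 ≤ α) (ha : 0 < a)
    (δ T : ℝ) (hδ : δ = 1 / ((2*(m:ℝ)-1)*(Q:ℝ)))
    (hT : T = 2*a*(Q:ℝ) * (2*(2*(m:ℝ)-1)*(Q:ℝ)) ^ α)
    (k : ℕ) (hk : 0 < k) (b : ℝ) (hb : b = T * ((k:ℝ)*δ/2) ^ α + a) :
    b ≤ T * ((k:ℝ)*δ/2) ^ α * ((2*(Q:ℝ)+1)/(2*(Q:ℝ))) ^ α ∧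
    (b/T) ^ (1/α) ≤ ((k:ℝ)*δ/2) * ((2*(Q:ℝ)+1)/(2*(Q:ℝ))) := by
  have hQ1 : (1:ℝ) ≤ Q := by exact_mod_cast hQ
  have hm1 : (1:ℝ) ≤ m := by exact_mod_cast hm
  have hk1 : (1:ℝ) ≤ k := by exact_mod_cast hk
  have hm2 : (0:ℝ) < 2 * m - 1 := by linarith
  have hx : (k:ℝ) * δ / 2 = k / (2 * (2 * m - 1) * Q) := by rw [hδ]; field_simp
  set c : ℝ := 2 * (2 * m - 1) * Q
  have hc : 0 < c := by positivity
  have hT0 : 0 < T := by rw [hT]; positivity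
  have hTx : T * ((k:ℝ) * δ / 2) ^ α = 2 * a * Q * (k:ℝ) ^ α := by
    rw [hT, hx, mul_assoc, rpow_mul_div_rpow_cancel hc (by positivity)]
  have hbound : b ≤ T * ((k:ℝ) * δ / 2) ^ α * ((2 * (Q:ℝ) + 1) / (2 * Q)) ^ α := by
    rw [hb]
    refine add_le_mul_rpow_add_one_div (by positivity) ha.le ?_ hα
    calc a * (2 * Q) = 2 * a * Q * 1 := by ring
      _ ≤ 2 * a * Q * (k:ℝ) ^ α := by gcongr; exact one_le_rpow hk1 (by linarith)
      _ = T * ((k:ℝ) * δ / 2) ^ α := hTx.symm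
  refine ⟨hbound, ?_⟩
  rw [one_div, rpow_inv_le_iff_of_pos (by rw [hb, hTx]; positivity) (by rw [hx]; positivity)
    (by linarith), mul_rpow (by rw [hx]; positivity) (by positivity), div_le_iff₀ hT0]
  linarith
end

section
/- Let α ≥ 1 and b₁, …, bₙ > 0 with maximum achievable lifetime defined in the fully dynamic variable-radii model. Then for any a ≥ 0 and any feasible pair (y, r) (i.e., a|yᵢ − xᵢ| ≤ bᵢ for all i, rᵢ ≥ 0, and the intervals [yᵢ − rᵢ, yᵢ + rᵢ] cover [0,1]), the lifetime min{i : rᵢ > 0} (bᵢ − a|yᵢ − xᵢ|)/rᵢ^α is at most (2·∑ⱼ bⱼ^(1/α))^α. -/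
open MeasureTheory Finset

theorem lifetime_upper_bound (n : ℕ) (α a : ℝ) (hα : 1 ≤ α) (ha : 0 ≤ a)
    (x y r b : Fin n → ℝ) (hb : ∀ i, 0 < b i)
    (hmove : ∀ i, a * |y i - x i| ≤ b i) (hr : ∀ i, 0 ≤ r i)
    (hcover : Set.Icc (0:ℝ) 1 ⊆ ⋃ i, Set.Icc (y i - r i) (y i + r i)) :
    ∃ i, 0 < r i ∧
      (b i - a * |y i - x i|) / (r i) ^ α ≤ (2 * ∑ j, (b j) ^ (1/α)) ^ α := by
  have hα0 : (0:ℝ) < α := lt_of_lt_of_le zero_lt_one hα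
  -- n is nonempty
  have h0mem : (0:ℝ) ∈ ⋃ i, Set.Icc (y i - r i) (y i + r i) :=
    hcover ⟨le_refl 0, zero_le_one⟩
  obtain ⟨_, ⟨i0, rfl⟩, _⟩ := h0mem
  haveI : Nonempty (Fin n) := ⟨i0⟩
  -- covering implies total length ≥ 1
  have hmeas : (1:ENNReal) ≤ ∑ i, ENNReal.ofReal (2 * r i) := by
    have h1 := (measure_mono (μ := volume) hcover).trans
      (measure_iUnion_fintype_le volume (fun i => Set.Icc (y i - r i) (y i + r i)))
    have h2 : ∀ i : Fin n, volume (Set.Icc (y i - r i) (y i + r i))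
        = ENNReal.ofReal (2 * r i) := by
      intro i
      rw [Real.volume_Icc]
      congr 1
      ring
    simpa [Real.volume_Icc, h2] using h1
  have key : (1:ℝ) ≤ ∑ i, 2 * r i := by
    rw [← ENNReal.ofReal_one,
      ← ENNReal.ofReal_sum_of_nonneg (fun i _ => mul_nonneg (by norm_num) (hr i) : ∀ i ∈ Finset.univ, 0 ≤ 2 * r i)]
      at hmeas
    exact (ENNReal.ofReal_le_ofReal_iff (Finset.sum_nonneg fun i _ => mul_nonneg (by norm_num) (hr i))).mp hmeas
  by_contra hcon
  push_neg at hcon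
  set S := ∑ j, (b j) ^ (1/α) with hSdef
  have hS : 0 < S := Finset.sum_pos (fun j _ => Real.rpow_pos_of_pos (hb j) _) Finset.univ_nonempty
  have h2S : (0:ℝ) < 2 * S := by linarith
  have hri : ∀ i, r i < (b i) ^ (1/α) / (2 * S) := by
    intro i
    rcases eq_or_lt_of_le (hr i) with h0 | h0
    · rw [← h0]
      have : (0:ℝ) < (b i) ^ (1/α) := Real.rpow_pos_of_pos (hb i) _
      positivity
    · have h := hcon i h0
      have hrα : 0 < r i ^ α := Real.rpow_pos_of_pos h0 α
      have h2 := (lt_div_iff₀ hrα).mp h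
      have h3 : 0 ≤ a * |y i - x i| := by positivity
      have h1 : (r i * (2 * S)) ^ α < b i := by
        rw [Real.mul_rpow (hr i) h2S.le]
        nlinarith
      have h5 : ((r i * (2 * S)) ^ α) ^ (1/α) < (b i) ^ (1/α) :=
        Real.rpow_lt_rpow (by positivity) h1 (by positivity)
      rw [← Real.rpow_mul (by positivity), mul_one_div, div_self hα0.ne', Real.rpow_one] at h5
      rw [lt_div_iff₀ h2S]
      exact h5
  have hsum : ∑ i, 2 * r i < 1 := by
    calc ∑ i, 2 * r i < ∑ i, 2 * ((b i) ^ (1/α) / (2 * S)) := by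
          apply Finset.sum_lt_sum_of_nonempty Finset.univ_nonempty
          intro i _
          have := hri i
          linarith
      _ = 1 := by
          have : ∀ i ∈ Finset.univ, 2 * ((b i) ^ (1/α) / (2 * S)) = (b i) ^ (1/α) / S := by
            intro i _
            field_simp
          rw [Finset.sum_congr rfl this, ← Finset.sum_div, ← hSdef, div_self hS.ne']
  linarith
end
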